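/- arXiv:1208.4544 — 3 statements merged into one kernel-verified Lean document; each statement's English description precedes it below -/
import Mathlib

section
/- Let A, A0 be real n×n matrices such that the pair (A, A0) satisfies hypothesis (H0) with constants (c0, c1). Then A is invertible and the pair (A⁻¹, A0⁻¹) satisfies hypothesis (H0) with constants (c0/c1², 1/c0); that is, vᵀA⁻¹v ≥ (c0/c1²)·vᵀA0⁻¹v for all v ∈ ℝⁿ, and wᵀA⁻¹v ≤ (1/c0)·√(vᵀA0⁻¹v)·√(wᵀA0⁻¹w) for all v, w ∈ ℝⁿ. -/
open Matrix

/-!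
Write `‖x‖ = √(xᵀ A₀ x)` and `‖v‖⋆ = √(vᵀ A₀⁻¹ v)`; these are dual norms, so `vᵀ x ≤ ‖v‖⋆ ‖x‖`.
Put `x = A⁻¹ v`. Coercivity gives `c₀ ‖x‖² ≤ xᵀ A x = vᵀ x ≤ ‖v‖⋆ ‖x‖`, so `c₀ ‖x‖ ≤ ‖v‖⋆`, and then
`wᵀ A⁻¹ v = wᵀ x ≤ ‖w‖⋆ ‖x‖ ≤ ‖w‖⋆ ‖v‖⋆ / c₀`. Boundedness tested against `A₀⁻¹ v` gives
`‖v‖⋆² = (A₀⁻¹ v)ᵀ A x ≤ c₁ ‖x‖ ‖v‖⋆`, so `‖v‖⋆ ≤ c₁ ‖x‖`, and then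
`vᵀ A⁻¹ v = xᵀ A x ≥ c₀ ‖x‖² ≥ (c₀ / c₁²) ‖v‖⋆²`.
-/

lemma le_of_sq_le_mul {a b : ℝ} (hb : 0 ≤ b) (h : a ^ 2 ≤ b * a) : a ≤ b := by
  by_contra! hlt
  nlinarith

namespace Matrix

variable {ι : Type*} [Fintype ι]

lemma IsSymm.dotProduct_mulVec_comm {R : Type*} [CommSemiring R] {M : Matrix ι ι R}
    (hM : M.IsSymm) (x y : ι → R) : x ⬝ᵥ M *ᵥ y = y ⬝ᵥ M *ᵥ x := by
  rw [dotProduct_mulVec, ← mulVec_transpose, hM.eq, dotProduct_comm]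

lemma PosSemidef.dotProduct_mulVec_self_nonneg {M : Matrix ι ι ℝ} (hM : M.PosSemidef)
    (x : ι → ℝ) : 0 ≤ x ⬝ᵥ M *ᵥ x :=
  hM.dotProduct_mulVec_nonneg x

variable [DecidableEq ι]

lemma PosSemidef.dotProduct_mulVec_le_sqrt_mul_sqrt {M : Matrix ι ι ℝ} (hM : M.PosSemidef)
    (x y : ι → ℝ) : y ⬝ᵥ M *ᵥ x ≤ √(x ⬝ᵥ M *ᵥ x) * √(y ⬝ᵥ M *ᵥ y) := by
  have hsymm : M.IsSymm := isHermitian_iff_isSymm.1 hM.isHermitian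
  have hnonneg := hM.dotProduct_mulVec_self_nonneg
  have hsq : (y ⬝ᵥ M *ᵥ x) ^ 2 ≤ (x ⬝ᵥ M *ᵥ x) * (y ⬝ᵥ M *ᵥ y) := by
    rw [hsymm.dotProduct_mulVec_comm]
    simpa only [toBilin'_apply'] using
      (toBilin' M).apply_sq_le_of_symm (by simpa only [toBilin'_apply'] using hnonneg)
        (LinearMap.BilinForm.isSymm_iff.1 (isSymm_toBilin'_iff_isSymm.2 hsymm)) x y
  calc y ⬝ᵥ M *ᵥ x ≤ |y ⬝ᵥ M *ᵥ x| := le_abs_self _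
    _ ≤ √((x ⬝ᵥ M *ᵥ x) * (y ⬝ᵥ M *ᵥ y)) := Real.abs_le_sqrt hsq
    _ = √(x ⬝ᵥ M *ᵥ x) * √(y ⬝ᵥ M *ᵥ y) := Real.sqrt_mul (hnonneg x) _

lemma mulVec_nonsing_inv_mulVec {R : Type*} [CommRing R] {M : Matrix ι ι R} (hM : IsUnit M)
    (u : ι → R) : M *ᵥ (M⁻¹ *ᵥ u) = u := by
  rw [mulVec_mulVec, mul_nonsing_inv _ ((isUnit_iff_isUnit_det M).1 hM), one_mulVec]

lemma PosDef.dotProduct_le_sqrt_mul_sqrt {M : Matrix ι ι ℝ} (hM : M.PosDef) (u x : ι → ℝ) :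
    u ⬝ᵥ x ≤ √(u ⬝ᵥ M⁻¹ *ᵥ u) * √(x ⬝ᵥ M *ᵥ x) := by
  have hsymm : M.IsSymm := isHermitian_iff_isSymm.1 hM.isHermitian
  have key := hM.posSemidef.dotProduct_mulVec_le_sqrt_mul_sqrt x (M⁻¹ *ᵥ u)
  rw [hsymm.dotProduct_mulVec_comm _ x, mulVec_nonsing_inv_mulVec hM.isUnit, dotProduct_comm x,
    dotProduct_comm _ u] at key
  linarith [mul_comm √(u ⬝ᵥ M⁻¹ *ᵥ u) √(x ⬝ᵥ M *ᵥ x)]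

variable {A M : Matrix ι ι ℝ} {c : ℝ}

lemma PosDef.isUnit_of_coercive (hM : M.PosDef) (hc : 0 < c)
    (hcoer : ∀ v, c * (v ⬝ᵥ M *ᵥ v) ≤ v ⬝ᵥ A *ᵥ v) : IsUnit A := by
  rw [isUnit_iff_isUnit_det, isUnit_iff_ne_zero, Ne, ← exists_mulVec_eq_zero_iff]
  rintro ⟨v, hv, hAv⟩
  have := hcoer v
  rw [hAv, dotProduct_zero] at this
  exact (mul_pos hc (hM.dotProduct_mulVec_pos hv)).not_ge this

lemma PosDef.mul_sqrt_le_sqrt_of_coercive (hM : M.PosDef) (hc : 0 ≤ c)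
    (hcoer : ∀ v, c * (v ⬝ᵥ M *ᵥ v) ≤ v ⬝ᵥ A *ᵥ v) (x : ι → ℝ) :
    c * √(x ⬝ᵥ M *ᵥ x) ≤ √(A *ᵥ x ⬝ᵥ M⁻¹ *ᵥ (A *ᵥ x)) := by
  set s := √(x ⬝ᵥ M *ᵥ x)
  set t := √(A *ᵥ x ⬝ᵥ M⁻¹ *ᵥ (A *ᵥ x))
  have hs : s ^ 2 = x ⬝ᵥ M *ᵥ x := Real.sq_sqrt (hM.posSemidef.dotProduct_mulVec_self_nonneg x)
  have key : c * s ^ 2 ≤ t * s := by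
    rw [hs]
    calc c * (x ⬝ᵥ M *ᵥ x) ≤ x ⬝ᵥ A *ᵥ x := hcoer x
      _ = A *ᵥ x ⬝ᵥ x := dotProduct_comm _ _
      _ ≤ t * s := hM.dotProduct_le_sqrt_mul_sqrt _ x
  refine le_of_sq_le_mul (Real.sqrt_nonneg _) ?_
  calc (c * s) ^ 2 = c * (c * s ^ 2) := by ring
    _ ≤ c * (t * s) := mul_le_mul_of_nonneg_left key hc
    _ = t * (c * s) := by ring

lemma PosDef.sqrt_le_mul_sqrt_of_bounded (hM : M.PosDef) (hc : 0 ≤ c)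
    (hbdd : ∀ v w, w ⬝ᵥ A *ᵥ v ≤ c * √(v ⬝ᵥ M *ᵥ v) * √(w ⬝ᵥ M *ᵥ w)) (x : ι → ℝ) :
    √(A *ᵥ x ⬝ᵥ M⁻¹ *ᵥ (A *ᵥ x)) ≤ c * √(x ⬝ᵥ M *ᵥ x) := by
  set s := √(x ⬝ᵥ M *ᵥ x)
  set t := √(A *ᵥ x ⬝ᵥ M⁻¹ *ᵥ (A *ᵥ x))
  have ht : t ^ 2 = A *ᵥ x ⬝ᵥ M⁻¹ *ᵥ (A *ᵥ x) :=
    Real.sq_sqrt (hM.inv.posSemidef.dotProduct_mulVec_self_nonneg _)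
  have key : t ^ 2 ≤ c * s * t := by
    have := hbdd x (M⁻¹ *ᵥ (A *ᵥ x))
    rw [mulVec_nonsing_inv_mulVec hM.isUnit, dotProduct_comm _ (A *ᵥ x)] at this
    rw [ht]
    exact this
  exact le_of_sq_le_mul (mul_nonneg hc (Real.sqrt_nonneg _)) key

end Matrix

/-- If the pair (A, A0) satisfies hypothesis (H0) with constants (c0, c1)
(A0 symmetric positive definite), then A is invertible and the pair (A⁻¹, A0⁻¹)
satisfies (H0) with constants (c0/c1², 1/c0). -/
theorem stmt_0 {n : ℕ} (A A0 : Matrix (Fin n) (Fin n) ℝ) (c0 c1 : ℝ)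
    (hc0 : 0 < c0) (hc1 : 0 < c1) (hA0 : A0.PosDef)
    (hcoer : ∀ v : Fin n → ℝ, c0 * (v ⬝ᵥ A0.mulVec v) ≤ v ⬝ᵥ A.mulVec v)
    (hbdd : ∀ v w : Fin n → ℝ, w ⬝ᵥ A.mulVec v ≤
      c1 * Real.sqrt (v ⬝ᵥ A0.mulVec v) * Real.sqrt (w ⬝ᵥ A0.mulVec w)) :
    IsUnit A ∧
    (∀ v : Fin n → ℝ, (c0 / c1 ^ 2) * (v ⬝ᵥ A0⁻¹.mulVec v) ≤ v ⬝ᵥ A⁻¹.mulVec v) ∧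
    (∀ v w : Fin n → ℝ, w ⬝ᵥ A⁻¹.mulVec v ≤
      (1 / c0) * Real.sqrt (v ⬝ᵥ A0⁻¹.mulVec v) * Real.sqrt (w ⬝ᵥ A0⁻¹.mulVec w)) := by
  have hA : IsUnit A := hA0.isUnit_of_coercive hc0 hcoer
  have hAA := mulVec_nonsing_inv_mulVec hA
  refine ⟨hA, fun v => ?_, fun v w => ?_⟩
  · set x := A⁻¹ *ᵥ v
    have hx : √(v ⬝ᵥ A0⁻¹ *ᵥ v) ≤ c1 * √(x ⬝ᵥ A0 *ᵥ x) :=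
      hAA v ▸ hA0.sqrt_le_mul_sqrt_of_bounded hc1.le hbdd x
    calc c0 / c1 ^ 2 * (v ⬝ᵥ A0⁻¹ *ᵥ v) = c0 / c1 ^ 2 * √(v ⬝ᵥ A0⁻¹ *ᵥ v) ^ 2 := by
          rw [Real.sq_sqrt (hA0.inv.posSemidef.dotProduct_mulVec_self_nonneg v)]
      _ ≤ c0 / c1 ^ 2 * (c1 * √(x ⬝ᵥ A0 *ᵥ x)) ^ 2 := by gcongr
      _ = c0 * (x ⬝ᵥ A0 *ᵥ x) := by
          rw [mul_pow, Real.sq_sqrt (hA0.posSemidef.dotProduct_mulVec_self_nonneg x)]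
          field_simp
      _ ≤ x ⬝ᵥ A *ᵥ x := hcoer x
      _ = v ⬝ᵥ x := by rw [dotProduct_comm, hAA]
  · set x := A⁻¹ *ᵥ v
    have hx : c0 * √(x ⬝ᵥ A0 *ᵥ x) ≤ √(v ⬝ᵥ A0⁻¹ *ᵥ v) :=
      hAA v ▸ hA0.mul_sqrt_le_sqrt_of_coercive hc0.le hcoer x
    calc w ⬝ᵥ x ≤ √(w ⬝ᵥ A0⁻¹ *ᵥ w) * √(x ⬝ᵥ A0 *ᵥ x) := hA0.dotProduct_le_sqrt_mul_sqrt w x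
      _ ≤ √(w ⬝ᵥ A0⁻¹ *ᵥ w) * (1 / c0 * √(v ⬝ᵥ A0⁻¹ *ᵥ v)) := by
          gcongr
          rw [one_div_mul_eq_div, le_div_iff₀ hc0, mul_comm]
          exact hx
      _ = 1 / c0 * √(v ⬝ᵥ A0⁻¹ *ᵥ v) * √(w ⬝ᵥ A0⁻¹ *ᵥ w) := by ring
end

section
/- Let E be a finite-dimensional real inner product space, M : E → E a linear map, and α0, α1 > 0 constants such that ⟨v, Mv⟩ ≥ α0·‖v‖² and ‖Mv‖ ≤ α1·‖v‖ for all v ∈ E. Then for every m ∈ ℕ and every r0 ∈ E there exists a real polynomial p with degree at most m and p(0) = 1 such that ‖p(M)(r0)‖ ≤ (1 − α0²/α1²)^{m/2}·‖r0‖. -/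
/-!
With `β = α0 / α1²`, the damped Richardson step `v ↦ v - β • M v` satisfies
`‖v - β • M v‖² ≤ (1 - 2βα0 + β²α1²)‖v‖² = (1 - α0²/α1²)‖v‖²`, so `p = (1 - βX)ᵐ` does the job.
-/

open scoped RealInnerProductSpace
open Polynomial

theorem Module.End.norm_pow_apply_le {R E : Type*} [Ring R] [SeminormedAddCommGroup E]
    [Module R E] {f : Module.End R E} {K : ℝ} (hK : 0 ≤ K) (hf : ∀ v, ‖f v‖ ≤ K * ‖v‖)
    (n : ℕ) (v : E) : ‖(f ^ n) v‖ ≤ K ^ n * ‖v‖ := by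
  induction n generalizing v with
  | zero => simp
  | succ n ih =>
    calc ‖(f ^ (n + 1)) v‖ = ‖(f ^ n) (f v)‖ := by rw [pow_succ, Module.End.mul_apply]
      _ ≤ K ^ n * ‖f v‖ := ih (f v)
      _ ≤ K ^ n * (K * ‖v‖) := by gcongr; exact hf v
      _ = K ^ (n + 1) * ‖v‖ := by ring

theorem norm_le_sqrt_mul_of_sq_le {E : Type*} [SeminormedAddCommGroup E] {u v : E} {c : ℝ}
    (h : ‖u‖ ^ 2 ≤ c * ‖v‖ ^ 2) : ‖u‖ ≤ √c * ‖v‖ := by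
  simpa [Real.sqrt_mul' c (sq_nonneg ‖v‖)] using Real.sqrt_le_sqrt h

section Richardson

variable {E : Type*} [NormedAddCommGroup E] [InnerProductSpace ℝ E]
  {M : E →ₗ[ℝ] E} {α0 α1 : ℝ}

theorem norm_sub_smul_apply_sq_le (hcoer : ∀ v : E, α0 * ‖v‖ ^ 2 ≤ ⟪v, M v⟫)
    (hbdd : ∀ v : E, ‖M v‖ ≤ α1 * ‖v‖) {β : ℝ} (hβ : 0 ≤ β) (v : E) :
    ‖v - β • M v‖ ^ 2 ≤ (1 - 2 * β * α0 + β ^ 2 * α1 ^ 2) * ‖v‖ ^ 2 := by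
  have hMv : ‖M v‖ ^ 2 ≤ α1 ^ 2 * ‖v‖ ^ 2 := by
    rw [← mul_pow]; exact pow_le_pow_left₀ (norm_nonneg _) (hbdd v) 2
  calc ‖v - β • M v‖ ^ 2 = ‖v‖ ^ 2 - 2 * β * ⟪v, M v⟫ + β ^ 2 * ‖M v‖ ^ 2 := by
        rw [norm_sub_sq_real, real_inner_smul_right, norm_smul, mul_pow, Real.norm_eq_abs,
          sq_abs]
        ring
    _ ≤ ‖v‖ ^ 2 - 2 * β * (α0 * ‖v‖ ^ 2) + β ^ 2 * (α1 ^ 2 * ‖v‖ ^ 2) := by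
        gcongr
        exact hcoer v
    _ = (1 - 2 * β * α0 + β ^ 2 * α1 ^ 2) * ‖v‖ ^ 2 := by ring

/-- The step size `α0 / α1²` minimises `1 - 2βα0 + β²α1²`. -/
theorem norm_sub_optimal_smul_apply_sq_le (hα0 : 0 ≤ α0)
    (hcoer : ∀ v : E, α0 * ‖v‖ ^ 2 ≤ ⟪v, M v⟫) (hbdd : ∀ v : E, ‖M v‖ ≤ α1 * ‖v‖) (v : E) :
    ‖v - (α0 / α1 ^ 2) • M v‖ ^ 2 ≤ (1 - α0 ^ 2 / α1 ^ 2) * ‖v‖ ^ 2 := by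
  have hrate :
      1 - 2 * (α0 / α1 ^ 2) * α0 + (α0 / α1 ^ 2) ^ 2 * α1 ^ 2 = 1 - α0 ^ 2 / α1 ^ 2 := by
    rcases eq_or_ne α1 0 with rfl | h
    · simp
    · field_simp; ring
  rw [← hrate]
  exact norm_sub_smul_apply_sq_le hcoer hbdd (by positivity) v

end Richardson

theorem natDegree_one_sub_C_mul_X_pow_le {R : Type*} [Ring R] (β : R) (m : ℕ) :
    ((1 - C β * X) ^ m).natDegree ≤ m := by
  have h : (1 - C β * X).natDegree ≤ 1 := by compute_degree
  simpa using natDegree_pow_le_of_le m h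

theorem aeval_one_sub_C_mul_X_pow {R A : Type*} [CommRing R] [Ring A] [Algebra R A]
    (a : A) (β : R) (m : ℕ) :
    aeval a ((1 - C β * X) ^ m) = (1 - β • a) ^ m := by
  simp [Algebra.smul_def]

theorem stmt_13_general {E : Type*} [NormedAddCommGroup E] [InnerProductSpace ℝ E]
    (M : E →ₗ[ℝ] E) (α0 α1 : ℝ)
    (hα0 : 0 < α0)
    (hcoer : ∀ v : E, α0 * ‖v‖ ^ 2 ≤ ⟪v, M v⟫)
    (hbdd : ∀ v : E, ‖M v‖ ≤ α1 * ‖v‖) :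
    ∀ (m : ℕ) (r0 : E), ∃ p : Polynomial ℝ,
      p.natDegree ≤ m ∧ p.eval 0 = 1 ∧
      ‖(Polynomial.aeval M p) r0‖ ≤
        (1 - α0 ^ 2 / α1 ^ 2) ^ ((m : ℝ) / 2) * ‖r0‖ := by
  intro m r0
  set c := 1 - α0 ^ 2 / α1 ^ 2
  have hstep (v : E) : ‖(1 - (α0 / α1 ^ 2) • M) v‖ ^ 2 ≤ c * ‖v‖ ^ 2 :=
    norm_sub_optimal_smul_apply_sq_le hα0.le hcoer hbdd v
  refine ⟨(1 - C (α0 / α1 ^ 2) * X) ^ m, natDegree_one_sub_C_mul_X_pow_le _ m, by simp, ?_⟩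
  rw [aeval_one_sub_C_mul_X_pow]
  rcases eq_or_ne r0 0 with rfl | hr
  · simp
  -- a nonzero vector forces `c ≥ 0`, which keeps `c ^ (m / 2)` away from junk values
  have hc : 0 ≤ c := by
    have hr2 : 0 < ‖r0‖ ^ 2 := by positivity
    nlinarith [hstep r0, sq_nonneg ‖(1 - (α0 / α1 ^ 2) • M) r0‖]
  rw [Real.rpow_div_two_eq_sqrt _ hc, Real.rpow_natCast]
  exact Module.End.norm_pow_apply_le (Real.sqrt_nonneg c)
    (fun v => norm_le_sqrt_mul_of_sq_le (hstep v)) m r0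

/-- If M is a linear operator on a finite-dimensional real inner
product space E with ⟨v, Mv⟩ ≥ α0·‖v‖² and ‖Mv‖ ≤ α1·‖v‖ for all v (α0, α1 > 0),
then for every m ∈ ℕ and r0 ∈ E there is a real polynomial p of degree at most m
with p(0) = 1 such that ‖p(M)(r0)‖ ≤ (1 − α0²/α1²)^{m/2}·‖r0‖. -/
theorem stmt_13 {E : Type*} [NormedAddCommGroup E] [InnerProductSpace ℝ E]
    [FiniteDimensional ℝ E] (M : E →ₗ[ℝ] E) (α0 α1 : ℝ)
    (hα0 : 0 < α0) (hα1 : 0 < α1)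
    (hcoer : ∀ v : E, α0 * ‖v‖ ^ 2 ≤ ⟪v, M v⟫)
    (hbdd : ∀ v : E, ‖M v‖ ≤ α1 * ‖v‖) :
    ∀ (m : ℕ) (r0 : E), ∃ p : Polynomial ℝ,
      p.natDegree ≤ m ∧ p.eval 0 = 1 ∧
      ‖(Polynomial.aeval M p) r0‖ ≤
        (1 - α0 ^ 2 / α1 ^ 2) ^ ((m : ℝ) / 2) * ‖r0‖ :=
  stmt_13_general M α0 α1 hα0 hcoer hbdd
end

section
/- Let A and Z be real n×n matrices such that Z is symmetric positive definite, the pair (A, Z) satisfies hypothesis (H0) with constants (α0, α1), and A is invertible. Then for every m ∈ ℕ and every r0 ∈ ℝⁿ there exists a real polynomial p with degree at most m and p(0) = 1 such that ‖p(A Z⁻¹) r0‖_{Z⁻¹} ≤ (1 − α0²/α1²)^{m/2}·‖r0‖_{Z⁻¹}, where ‖v‖_{Z⁻¹} = √(vᵀZ⁻¹v) and p(A Z⁻¹) denotes evaluation of p at the matrix A Z⁻¹. -/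
/-!
The polynomial is that of damped Richardson iteration, `p = (1 - β X)^m` with `β = α0 / α1²`.
Substituting `x = Z u` turns (H0) into coercivity `⟨x, A Z⁻¹ x⟩ ≥ α0 ‖x‖²` and boundedness
`‖A Z⁻¹ x‖ ≤ α1 ‖x‖` in the `Z⁻¹`-norm, so one step `x ↦ x - β A Z⁻¹ x` multiplies the squared
norm by at most `1 - 2 β α0 + β² α1²`, which this choice of `β` minimises to `1 - α0² / α1²`.
-/

open Matrix Polynomial

section QuadraticForm

variable {ι : Type*} [Fintype ι]

lemma Matrix.IsSymm.dotProduct_mulVec_comm_s18 {S : Matrix ι ι ℝ} (hS : S.IsSymm) (x y : ι → ℝ) :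
    x ⬝ᵥ S *ᵥ y = y ⬝ᵥ S *ᵥ x := by
  rw [dotProduct_mulVec, ← mulVec_transpose, hS.eq, dotProduct_comm]

lemma Matrix.IsSymm.mulVec_dotProduct_inv_mulVec [DecidableEq ι] {Z : Matrix ι ι ℝ}
    (hZ : Z.IsSymm) (hdet : IsUnit Z.det) (u y : ι → ℝ) :
    Z *ᵥ u ⬝ᵥ Z⁻¹ *ᵥ y = u ⬝ᵥ y := by
  rw [dotProduct_mulVec, ← hZ.eq, mulVec_transpose, hZ.eq, vecMul_vecMul,
    mul_nonsing_inv _ hdet, vecMul_one]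

lemma quadForm_sub_smul_mulVec_le {S M : Matrix ι ι ℝ} (hS : S.IsSymm) {a b β : ℝ} (hβ : 0 ≤ β)
    (hcoer : ∀ x, a * (x ⬝ᵥ S *ᵥ x) ≤ x ⬝ᵥ S *ᵥ (M *ᵥ x))
    (hbdd : ∀ x, M *ᵥ x ⬝ᵥ S *ᵥ (M *ᵥ x) ≤ b * (x ⬝ᵥ S *ᵥ x)) (x : ι → ℝ) :
    (x - β • M *ᵥ x) ⬝ᵥ S *ᵥ (x - β • M *ᵥ x) ≤
      (1 - 2 * β * a + β ^ 2 * b) * (x ⬝ᵥ S *ᵥ x) := by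
  have hexpand : (x - β • M *ᵥ x) ⬝ᵥ S *ᵥ (x - β • M *ᵥ x) = x ⬝ᵥ S *ᵥ x
      - 2 * β * (x ⬝ᵥ S *ᵥ (M *ᵥ x)) + β ^ 2 * (M *ᵥ x ⬝ᵥ S *ᵥ (M *ᵥ x)) := by
    simp only [mulVec_sub, mulVec_smul, sub_dotProduct, dotProduct_sub, smul_dotProduct,
      dotProduct_smul, smul_eq_mul, hS.dotProduct_mulVec_comm_s18 (M *ᵥ x) x]
    ring
  rw [hexpand]
  nlinarith [hcoer x, hbdd x, sq_nonneg β]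

lemma quadForm_pow_mulVec_le [DecidableEq ι] {S N : Matrix ι ι ℝ} {t : ℝ} (ht : 0 ≤ t)
    (hN : ∀ x, N *ᵥ x ⬝ᵥ S *ᵥ (N *ᵥ x) ≤ t * (x ⬝ᵥ S *ᵥ x)) (k : ℕ) (x : ι → ℝ) :
    (N ^ k) *ᵥ x ⬝ᵥ S *ᵥ ((N ^ k) *ᵥ x) ≤ t ^ k * (x ⬝ᵥ S *ᵥ x) := by
  induction k with
  | zero => simp
  | succ k ih =>
    calc (N ^ (k + 1)) *ᵥ x ⬝ᵥ S *ᵥ ((N ^ (k + 1)) *ᵥ x)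
        ≤ t * ((N ^ k) *ᵥ x ⬝ᵥ S *ᵥ ((N ^ k) *ᵥ x)) := by
          rw [pow_succ', ← mulVec_mulVec]; exact hN _
      _ ≤ t * (t ^ k * (x ⬝ᵥ S *ᵥ x)) := mul_le_mul_of_nonneg_left ih ht
      _ = t ^ (k + 1) * (x ⬝ᵥ S *ᵥ x) := by ring

end QuadraticForm

lemma le_sq_mul_of_le_mul_sqrt_mul_sqrt {s c α : ℝ} (hs : 0 ≤ s) (hc : 0 ≤ c)
    (h : s ≤ α * √c * √s) : s ≤ α ^ 2 * c := by
  nlinarith [sq_nonneg (α * √c - √s), Real.sq_sqrt hs, Real.sq_sqrt hc, Real.sqrt_nonneg s,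
    Real.sqrt_nonneg c]

section H0

variable {ι : Type*} [Fintype ι] [DecidableEq ι] {A Z : Matrix ι ι ℝ}

lemma Matrix.PosDef.exists_mulVec_eq (hZ : Z.PosDef) (x : ι → ℝ) : ∃ u, Z *ᵥ u = x :=
  mulVec_surjective_iff_isUnit.mpr hZ.isUnit x

lemma mul_inv_mulVec_mulVec (hdet : IsUnit Z.det) (u : ι → ℝ) :
    (A * Z⁻¹) *ᵥ (Z *ᵥ u) = A *ᵥ u := by
  rw [mulVec_mulVec, Matrix.mul_assoc, nonsing_inv_mul _ hdet, Matrix.mul_one]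

lemma Matrix.PosDef.le_dotProduct_inv_mulVec_mul_inv {α0 : ℝ} (hZ : Z.PosDef)
    (hcoer : ∀ v, α0 * (v ⬝ᵥ Z *ᵥ v) ≤ v ⬝ᵥ A *ᵥ v) (x : ι → ℝ) :
    α0 * (x ⬝ᵥ Z⁻¹ *ᵥ x) ≤ x ⬝ᵥ Z⁻¹ *ᵥ ((A * Z⁻¹) *ᵥ x) := by
  have hsymm : Z.IsSymm := isHermitian_iff_isSymm.mp hZ.isHermitian
  have hdet : IsUnit Z.det := (isUnit_iff_isUnit_det Z).mp hZ.isUnit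
  obtain ⟨u, rfl⟩ := hZ.exists_mulVec_eq x
  rw [mul_inv_mulVec_mulVec hdet, hsymm.mulVec_dotProduct_inv_mulVec hdet,
    hsymm.mulVec_dotProduct_inv_mulVec hdet]
  exact hcoer u

lemma Matrix.PosDef.inv_quadForm_mul_inv_mulVec_le {α1 : ℝ} (hZ : Z.PosDef)
    (hbdd : ∀ v w, w ⬝ᵥ A *ᵥ v ≤ α1 * √(v ⬝ᵥ Z *ᵥ v) * √(w ⬝ᵥ Z *ᵥ w)) (x : ι → ℝ) :
    (A * Z⁻¹) *ᵥ x ⬝ᵥ Z⁻¹ *ᵥ ((A * Z⁻¹) *ᵥ x) ≤ α1 ^ 2 * (x ⬝ᵥ Z⁻¹ *ᵥ x) := by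
  have hsymm : Z.IsSymm := isHermitian_iff_isSymm.mp hZ.isHermitian
  have hdet : IsUnit Z.det := (isUnit_iff_isUnit_det Z).mp hZ.isUnit
  obtain ⟨u, rfl⟩ := hZ.exists_mulVec_eq x
  obtain ⟨w, hw⟩ := hZ.exists_mulVec_eq (A *ᵥ u)
  rw [mul_inv_mulVec_mulVec hdet, ← hw, hsymm.mulVec_dotProduct_inv_mulVec hdet,
    hsymm.mulVec_dotProduct_inv_mulVec hdet]
  have h := hbdd u w
  rw [← hw] at h
  exact le_sq_mul_of_le_mul_sqrt_mul_sqrt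
    (by simpa using hZ.posSemidef.dotProduct_mulVec_nonneg w)
    (by simpa using hZ.posSemidef.dotProduct_mulVec_nonneg u) h

end H0

lemma Matrix.PosDef.le_of_coercive_of_bounded {ι : Type*} [Fintype ι] [Nonempty ι]
    {A Z : Matrix ι ι ℝ} {α0 α1 : ℝ} (hZ : Z.PosDef)
    (hcoer : ∀ v, α0 * (v ⬝ᵥ Z *ᵥ v) ≤ v ⬝ᵥ A *ᵥ v)
    (hbdd : ∀ v w, w ⬝ᵥ A *ᵥ v ≤ α1 * √(v ⬝ᵥ Z *ᵥ v) * √(w ⬝ᵥ Z *ᵥ w)) : α0 ≤ α1 := by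
  obtain ⟨v, hv⟩ := exists_ne (0 : ι → ℝ)
  have hpos : 0 < v ⬝ᵥ Z *ᵥ v := by simpa using hZ.dotProduct_mulVec_pos hv
  have h := (hcoer v).trans (hbdd v v)
  rw [mul_assoc, Real.mul_self_sqrt hpos.le] at h
  exact le_of_mul_le_mul_right h hpos

lemma Real.sqrt_pow_eq_rpow {t : ℝ} (ht : 0 ≤ t) (m : ℕ) : √(t ^ m) = t ^ ((m : ℝ) / 2) := by
  rw [Real.sqrt_eq_rpow, ← Real.rpow_natCast, ← Real.rpow_mul ht]
  ring_nf

theorem stmt_18_general {n : ℕ} (A Z : Matrix (Fin n) (Fin n) ℝ) (α0 α1 : ℝ)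
    (hα0 : 0 < α0) (hα1 : 0 < α1) (hZ : Z.PosDef)
    (hcoer : ∀ v : Fin n → ℝ, α0 * (v ⬝ᵥ Z.mulVec v) ≤ v ⬝ᵥ A.mulVec v)
    (hbdd : ∀ v w : Fin n → ℝ, w ⬝ᵥ A.mulVec v ≤
      α1 * Real.sqrt (v ⬝ᵥ Z.mulVec v) * Real.sqrt (w ⬝ᵥ Z.mulVec w)) :
    ∀ (m : ℕ) (r0 : Fin n → ℝ), ∃ p : Polynomial ℝ,
      p.natDegree ≤ m ∧ p.eval 0 = 1 ∧
      Real.sqrt ((Polynomial.aeval (A * Z⁻¹) p).mulVec r0 ⬝ᵥ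
          Z⁻¹.mulVec ((Polynomial.aeval (A * Z⁻¹) p).mulVec r0)) ≤
        (1 - α0 ^ 2 / α1 ^ 2) ^ ((m : ℝ) / 2) *
          Real.sqrt (r0 ⬝ᵥ Z⁻¹.mulVec r0) := by
  intro m r0
  rcases isEmpty_or_nonempty (Fin n) with hn | hn
  · exact ⟨1, by simp, by simp, by simp [dotProduct]⟩
  set β := α0 / α1 ^ 2
  set t := 1 - α0 ^ 2 / α1 ^ 2
  have ht : 0 ≤ t := sub_nonneg.mpr <| div_le_one_of_le₀
    (pow_le_pow_left₀ hα0.le (hZ.le_of_coercive_of_bounded hcoer hbdd) 2) (by positivity)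
  have hstep : ∀ x, (1 - β • (A * Z⁻¹)) *ᵥ x ⬝ᵥ Z⁻¹ *ᵥ ((1 - β • (A * Z⁻¹)) *ᵥ x) ≤
      t * (x ⬝ᵥ Z⁻¹ *ᵥ x) := by
    intro x
    have hrate : 1 - 2 * β * α0 + β ^ 2 * α1 ^ 2 = t := by
      simp only [β, t]; field_simp; ring
    rw [sub_mulVec, one_mulVec, smul_mulVec, ← hrate]
    exact quadForm_sub_smul_mulVec_le (isHermitian_iff_isSymm.mp hZ.inv.isHermitian)
      (by positivity) (hZ.le_dotProduct_inv_mulVec_mul_inv hcoer)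
      (hZ.inv_quadForm_mul_inv_mulVec_le hbdd) x
  refine ⟨(1 - C β * X) ^ m, by compute_degree!, by simp, ?_⟩
  have haeval : aeval (A * Z⁻¹) ((1 - C β * X) ^ m) = (1 - β • (A * Z⁻¹)) ^ m := by
    simp [Algebra.smul_def]
  rw [haeval]
  calc _ ≤ √(t ^ m * (r0 ⬝ᵥ Z⁻¹ *ᵥ r0)) :=
        Real.sqrt_le_sqrt (quadForm_pow_mulVec_le ht hstep m r0)
    _ = t ^ ((m : ℝ) / 2) * √(r0 ⬝ᵥ Z⁻¹ *ᵥ r0) := by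
        rw [Real.sqrt_mul (pow_nonneg ht m), Real.sqrt_pow_eq_rpow ht]

/-- If Z is symmetric positive definite, (A, Z) satisfies (H0) with
constants (α0, α1), and A is invertible, then for every m ∈ ℕ and r0 ∈ ℝⁿ there is a
real polynomial p of degree at most m with p(0) = 1 such that
‖p(AZ⁻¹)r0‖_{Z⁻¹} ≤ (1 − α0²/α1²)^{m/2}·‖r0‖_{Z⁻¹}, where
‖v‖_{Z⁻¹} = √(vᵀZ⁻¹v). -/
theorem stmt_18 {n : ℕ} (A Z : Matrix (Fin n) (Fin n) ℝ) (α0 α1 : ℝ)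
    (hα0 : 0 < α0) (hα1 : 0 < α1) (hZ : Z.PosDef) (hA : IsUnit A)
    (hcoer : ∀ v : Fin n → ℝ, α0 * (v ⬝ᵥ Z.mulVec v) ≤ v ⬝ᵥ A.mulVec v)
    (hbdd : ∀ v w : Fin n → ℝ, w ⬝ᵥ A.mulVec v ≤
      α1 * Real.sqrt (v ⬝ᵥ Z.mulVec v) * Real.sqrt (w ⬝ᵥ Z.mulVec w)) :
    ∀ (m : ℕ) (r0 : Fin n → ℝ), ∃ p : Polynomial ℝ,
      p.natDegree ≤ m ∧ p.eval 0 = 1 ∧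
      Real.sqrt ((Polynomial.aeval (A * Z⁻¹) p).mulVec r0 ⬝ᵥ
          Z⁻¹.mulVec ((Polynomial.aeval (A * Z⁻¹) p).mulVec r0)) ≤
        (1 - α0 ^ 2 / α1 ^ 2) ^ ((m : ℝ) / 2) *
          Real.sqrt (r0 ⬝ᵥ Z⁻¹.mulVec r0) :=
  stmt_18_general A Z α0 α1 hα0 hα1 hZ hcoer hbdd
end
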